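/- arXiv:1305.0213 — 2 statements merged into one kernel-verified Lean document; each statement's English description precedes it below -/
import Mathlib

section
/- Let C* ⊆ [n] be nonempty, x = μ·1_{C*} with μ > 0, and x̂ ∈ ℝⁿ with 4‖x − x̂‖² < μ²|C*|. Let Ĉ ⊆ [n] be any nonempty maximizer of C ↦ ⟨x̂, 1_C⟩/(‖x̂‖√|C|) over nonempty subsets of [n]. Then 1 − |Ĉ ∩ C*|/√(|Ĉ||C*|) ≤ 4‖x̂ − x‖²/(μ²|C*|). -/
set_option maxHeartbeats 800000

/-- Indicator vector of a finite set of coordinates, as a vector in `EuclideanSpace ℝ (Fin n)`. -/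
noncomputable def indicatorVec {n : ℕ} (S : Finset (Fin n)) : EuclideanSpace ℝ (Fin n) :=
  WithLp.toLp 2 (fun i => if i ∈ S then (1 : ℝ) else 0)

lemma inner_indicator {n : ℕ} (S T : Finset (Fin n)) :
    (inner ℝ (indicatorVec S) (indicatorVec T) : ℝ) = ((S ∩ T).card : ℝ) := by
  simp only [PiLp.inner_apply, indicatorVec, PiLp.toLp_apply, RCLike.inner_apply, conj_trivial, ite_mul, one_mul,
    zero_mul]
  have : ∀ x : Fin n, (if x ∈ T then if x ∈ S then (1:ℝ) else 0 else 0)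
      = if x ∈ S ∩ T then (1:ℝ) else 0 := by
    intro x; by_cases h1 : x ∈ S <;> by_cases h2 : x ∈ T <;> simp [h1, h2]
  rw [Finset.sum_congr rfl (fun x _ => this x), Finset.sum_ite_mem, Finset.univ_inter,
    Finset.sum_const, nsmul_eq_mul, mul_one]

lemma norm_indicator {n : ℕ} (S : Finset (Fin n)) :
    ‖indicatorVec S‖ = Real.sqrt S.card := by
  rw [← Real.sqrt_sq (norm_nonneg _), ← real_inner_self_eq_norm_sq, inner_indicator,
    Finset.inter_self]


lemma aux_two_d {N d : ℝ} (hd0 : 0 ≤ d) (hN : 0 < N) (h4 : 4 * d ^ 2 < N ^ 2) : 2 * d < N := by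
  nlinarith

lemma aux_key {N h p : ℝ} (hh : 0 < h) (h2 : N ≤ 2 * h) (hp : p ≤ N * h) :
    2 * p * h ≤ N * p + h ^ 3 := by
  nlinarith [mul_nonneg hh.le (sq_nonneg (N - h)), mul_nonneg (sub_nonneg.2 h2) (sub_nonneg.2 hp)]

lemma aux_cp {N h p : ℝ} (key : 2 * p * h ≤ N * p + h ^ 3) : (2 * p - h ^ 2) * h ≤ N * p := by
  nlinarith [key]

theorem stmt_4 {n : ℕ} (Cstar : Finset (Fin n)) (hC : Cstar.Nonempty) (μ : ℝ) (hμ : 0 < μ)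
    (xh : EuclideanSpace ℝ (Fin n))
    (herr : 4 * ‖μ • indicatorVec Cstar - xh‖ ^ 2 < μ ^ 2 * Cstar.card)
    (Chat : Finset (Fin n)) (hChat : Chat.Nonempty)
    (hmax : ∀ C : Finset (Fin n), C.Nonempty →
      (inner ℝ xh (indicatorVec C) : ℝ) / (‖xh‖ * Real.sqrt C.card) ≤
        (inner ℝ xh (indicatorVec Chat) : ℝ) / (‖xh‖ * Real.sqrt Chat.card)) :
    1 - ((Chat ∩ Cstar).card : ℝ) / Real.sqrt (Chat.card * Cstar.card) ≤
      4 * ‖xh - μ • indicatorVec Cstar‖ ^ 2 / (μ ^ 2 * Cstar.card) := by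
  have hcard : (0:ℝ) < Cstar.card := by exact_mod_cast hC.card_pos
  have hcard2 : (0:ℝ) < Chat.card := by exact_mod_cast hChat.card_pos
  set x : EuclideanSpace ℝ (Fin n) := μ • indicatorVec Cstar with hxdef
  set a := Real.sqrt (Cstar.card : ℝ) with hadef
  set b := Real.sqrt (Chat.card : ℝ) with hbdef
  have ha : 0 < a := Real.sqrt_pos.2 hcard
  have hb : 0 < b := Real.sqrt_pos.2 hcard2
  have ha2 : a ^ 2 = Cstar.card := Real.sq_sqrt hcard.le
  have hb2 : b ^ 2 = Chat.card := Real.sq_sqrt hcard2.le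
  set u : EuclideanSpace ℝ (Fin n) := a⁻¹ • indicatorVec Cstar with hudef
  set v : EuclideanSpace ℝ (Fin n) := b⁻¹ • indicatorVec Chat with hvdef
  set t : ℝ := inner ℝ u v with htdef
  have ht : t = ((Chat ∩ Cstar).card : ℝ) / (b * a) := by
    rw [htdef, hudef, hvdef, real_inner_smul_left, real_inner_smul_right, inner_indicator,
      Finset.inter_comm, div_eq_mul_inv, mul_inv]
    ring
  set N := ‖x‖ with hNdef
  have hN : N = μ * a := by
    rw [hNdef, hxdef, norm_smul, norm_indicator, Real.norm_eq_abs, abs_of_pos hμ, hadef]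
  have hNpos : 0 < N := by rw [hN]; positivity
  have hN2 : N ^ 2 = μ ^ 2 * Cstar.card := by rw [hN, mul_pow, ha2]
  set d := ‖x - xh‖ with hddef
  have hd0 : 0 ≤ d := norm_nonneg _
  have herr' : 4 * d ^ 2 < N ^ 2 := by rw [hN2]; exact herr
  have hrev : ‖xh - x‖ = d := by rw [hddef, norm_sub_rev]
  have hhlb : N - d ≤ ‖xh‖ := by
    have := norm_sub_norm_le x xh
    linarith [this]
  have h2d : 2 * d < N := aux_two_d hd0 hNpos herr'
  have hhpos : 0 < ‖xh‖ := by linarith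
  have hsqrt : Real.sqrt ((Chat.card : ℝ) * Cstar.card) = b * a := by
    rw [Real.sqrt_mul hcard2.le]
  rw [hrev, ← hN2, hsqrt, ← ht]
  have hNsq : (0:ℝ) < N ^ 2 := by positivity
  rw [le_div_iff₀ hNsq]
  -- it suffices: (1 - t) * N^2 ≤ 4 * d^2
  have hu : ‖u‖ = 1 := by
    rw [hudef, norm_smul, norm_indicator, ← hadef, Real.norm_eq_abs, abs_of_pos (inv_pos.2 ha),
      inv_mul_cancel₀ ha.ne']
  have hv : ‖v‖ = 1 := by
    rw [hvdef, norm_smul, norm_indicator, ← hbdef, Real.norm_eq_abs, abs_of_pos (inv_pos.2 hb),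
      inv_mul_cancel₀ hb.ne']
  -- step 1 : from hmax
  have h1 : (inner ℝ xh u : ℝ) ≤ inner ℝ xh v := by
    have hm := hmax Cstar hC
    rw [div_le_div_iff₀ (by positivity) (by positivity)] at hm
    have hm' : ‖xh‖ * ((inner ℝ xh (indicatorVec Cstar) : ℝ) * b)
        ≤ ‖xh‖ * ((inner ℝ xh (indicatorVec Chat) : ℝ) * a) := by linear_combination hm
    have hXY := le_of_mul_le_mul_left hm' hhpos
    rw [hudef, hvdef, real_inner_smul_right, real_inner_smul_right,
      inv_mul_eq_div, inv_mul_eq_div, div_le_div_iff₀ ha hb]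
    exact hXY
  -- x relations
  have hxu : (inner ℝ x u : ℝ) = N := by
    rw [hxdef, hudef, real_inner_smul_left, real_inner_smul_right, inner_indicator,
      Finset.inter_self, hN, ← ha2]
    field_simp
  have hxv : (inner ℝ x v : ℝ) = N * t := by
    rw [hxdef, htdef, hudef, hvdef, real_inner_smul_left, real_inner_smul_right,
      real_inner_smul_left, real_inner_smul_right, inner_indicator, hN, mul_assoc,
      mul_inv_cancel_left₀ ha.ne']
  set c := N / ‖xh‖ with hcdef
  have hc0 : 0 ≤ c := by positivity
  set y : EuclideanSpace ℝ (Fin n) := c • xh with hydef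
  have h3 : (inner ℝ y (u - v) : ℝ) ≤ 0 := by
    rw [hydef, real_inner_smul_left, inner_sub_right]
    exact mul_nonpos_of_nonneg_of_nonpos hc0 (by linarith)
  have h4 : N * (1 - t) ≤ ‖x - y‖ * ‖u - v‖ := by
    have e1 : (inner ℝ x (u - v) : ℝ) = N * (1 - t) := by
      rw [inner_sub_right, hxu, hxv]; ring
    have e2 : (inner ℝ (x - y) (u - v) : ℝ) = inner ℝ x (u - v) - inner ℝ y (u - v) :=
      inner_sub_left x y (u - v)
    have e3 := real_inner_le_norm (x - y) (u - v)
    rw [e2, e1] at e3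
    linarith
  have hvu : (inner ℝ v u : ℝ) = t := by rw [htdef]; exact real_inner_comm u v
  have h5 : ‖u - v‖ ^ 2 = 2 - 2 * t := by
    rw [← real_inner_self_eq_norm_sq, inner_sub_left, inner_sub_right, inner_sub_right,
      real_inner_self_eq_norm_sq, real_inner_self_eq_norm_sq, hu, hv, hvu, ← htdef]
    ring
  -- ‖x - y‖^2 ≤ 2 d^2
  set p : ℝ := inner ℝ x xh with hpdef
  have hp : p ≤ N * ‖xh‖ := real_inner_le_norm x xh
  have hdsq : d ^ 2 = N ^ 2 - 2 * p + ‖xh‖ ^ 2 := by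
    rw [hddef, norm_sub_sq_real, ← hpdef, ← hNdef]
  have hxy2 : ‖x - y‖ ^ 2 ≤ 2 * d ^ 2 := by
    have e : ‖x - y‖ ^ 2 = N ^ 2 - 2 * (c * p) + c ^ 2 * ‖xh‖ ^ 2 := by
      have e1 : (inner ℝ x y : ℝ) = c * p := by rw [hydef, real_inner_smul_right, hpdef]
      have e2 : ‖y‖ ^ 2 = c ^ 2 * ‖xh‖ ^ 2 := by
        rw [hydef, norm_smul, mul_pow, Real.norm_eq_abs, sq_abs]
      rw [norm_sub_sq_real, e1, e2, ← hNdef]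
    have hch : c * ‖xh‖ = N := by rw [hcdef]; field_simp
    have key : 2 * p * ‖xh‖ ≤ N * p + ‖xh‖ ^ 3 := aux_key hhpos (by linarith) hp
    have hcp : 2 * p - ‖xh‖ ^ 2 ≤ c * p := by
      rw [hcdef, div_mul_eq_mul_div, le_div_iff₀ hhpos]
      exact aux_cp key
    have e2 : c ^ 2 * ‖xh‖ ^ 2 = N ^ 2 := by rw [← mul_pow, hch]
    rw [e, e2, hdsq]
    linarith
  -- combine
  rcases le_or_gt (1 - t) 0 with hcase | hcase
  · have h0 : (1 - t) * N ^ 2 ≤ 0 := mul_nonpos_of_nonpos_of_nonneg hcase hNsq.le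
    linarith [sq_nonneg d]
  · have hlhs : 0 ≤ N * (1 - t) := by positivity
    have hsq : (N * (1 - t)) ^ 2 ≤ (‖x - y‖ * ‖u - v‖) ^ 2 := pow_le_pow_left₀ hlhs h4 2
    have e : (‖x - y‖ * ‖u - v‖) ^ 2 = ‖x - y‖ ^ 2 * (2 - 2 * t) := by rw [mul_pow, h5]
    have hmono : ‖x - y‖ ^ 2 * (2 - 2 * t) ≤ 2 * d ^ 2 * (2 - 2 * t) :=
      mul_le_mul_of_nonneg_right hxy2 (by linarith)
    have hfin : (N ^ 2 * (1 - t)) * (1 - t) ≤ (4 * d ^ 2) * (1 - t) := by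
      rw [e] at hsq
      calc (N ^ 2 * (1 - t)) * (1 - t) = (N * (1 - t)) ^ 2 := by ring
        _ ≤ ‖x - y‖ ^ 2 * (2 - 2 * t) := hsq
        _ ≤ 2 * d ^ 2 * (2 - 2 * t) := hmono
        _ = (4 * d ^ 2) * (1 - t) := by ring
    have := le_of_mul_le_mul_right hfin hcase
    linarith
end

section
/- Let G be a graph on n vertices and let D be a hierarchical partition (dendrogram) of V(G) into connected blocks such that the children of each block partition it into connected subgraphs. If C* ⊆ V has cut size at most ρ (at most ρ edges of G leave C*), then at every level of D, at most ρ blocks D are impure, i.e., satisfy 0 < |D ∩ C*| < |D|. -/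
lemma cross_edge {V : Type*} (G : SimpleGraph V) (Cstar : Finset V) (S : Set V)
    {a b : S} (w : (G.induce S).Walk a b) (ha : a.1 ∈ Cstar) (hb : b.1 ∉ Cstar) :
    ∃ u v : V, u ∈ S ∧ v ∈ S ∧ u ∈ Cstar ∧ v ∉ Cstar ∧ G.Adj u v := by
  induction w with
  | nil => exact absurd ha hb
  | @cons x y z h p ih =>
    by_cases hy : y.1 ∈ Cstar
    · exact ih hy hb
    · exact ⟨x.1, y.1, x.2, y.2, ha, hy, h⟩

theorem stmt_5 {V : Type*} [Fintype V] [DecidableEq V] (G : SimpleGraph V)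
    [DecidableRel G.Adj] (Cstar : Finset V) (ρ : ℕ)
    (hcut : ((Cstar ×ˢ Cstarᶜ).filter (fun p => G.Adj p.1 p.2)).card ≤ ρ)
    -- `P` is the collection of blocks at one level of the dendrogram:
    -- pairwise disjoint connected blocks covering `V`.
    (P : Finset (Finset V))
    (hdisj : ∀ D₁ ∈ P, ∀ D₂ ∈ P, D₁ ≠ D₂ → Disjoint D₁ D₂)
    (hcover : ∀ v : V, ∃ D ∈ P, v ∈ D)
    (hconn : ∀ D ∈ P, (G.induce (D : Set V)).Connected) :
    (P.filter (fun D => 0 < (D ∩ Cstar).card ∧ (D ∩ Cstar).card < D.card)).card ≤ ρ := by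
  classical
  set E := (Cstar ×ˢ Cstarᶜ).filter (fun p => G.Adj p.1 p.2) with hE
  have key : ∀ D, D ∈ P.filter (fun D => 0 < (D ∩ Cstar).card ∧ (D ∩ Cstar).card < D.card) →
      ∃ p : V × V, p ∈ E ∧ p.1 ∈ D ∧ p.2 ∈ D := by
    intro D hD
    rw [Finset.mem_filter] at hD
    obtain ⟨hDP, hpos, hlt⟩ := hD
    obtain ⟨a, haa⟩ := Finset.card_pos.mp hpos
    rw [Finset.mem_inter] at haa
    have hssub : D ∩ Cstar ⊂ D := lt_of_le_of_ne Finset.inter_subset_left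
      (fun h => absurd (h ▸ hlt) (lt_irrefl _))
    obtain ⟨b, hbD, hbn⟩ := Finset.exists_of_ssubset hssub
    have hbC : b ∉ Cstar := fun h => hbn (Finset.mem_inter.mpr ⟨hbD, h⟩)
    have hreach := (hconn D hDP).preconnected ⟨a, haa.1⟩ ⟨b, hbD⟩
    obtain ⟨w⟩ := hreach
    obtain ⟨u, v, huS, hvS, huC, hvC, hadj⟩ := cross_edge G Cstar _ w haa.2 hbC
    refine ⟨(u, v), ?_, huS, hvS⟩
    rw [hE, Finset.mem_filter, Finset.mem_product, Finset.mem_compl]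
    exact ⟨⟨huC, hvC⟩, hadj⟩
  rcases Finset.eq_empty_or_nonempty
      (P.filter (fun D => 0 < (D ∩ Cstar).card ∧ (D ∩ Cstar).card < D.card)) with hQ | ⟨D0, hD0⟩
  · rw [hQ]; simpa using Nat.zero_le ρ
  · have hV : Nonempty V := by
      obtain ⟨p, _, hp, _⟩ := key D0 hD0
      exact ⟨p.1⟩
    have : Inhabited V := Classical.inhabited_of_nonempty hV
    choose! f hmem hu hv using key
    calc (P.filter _).card ≤ E.card := by
          apply Finset.card_le_card_of_injOn f (fun D hD => hmem D hD)
          intro D₁ h₁ D₂ h₂ hf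
          by_contra hne
          have hD₁P := (Finset.mem_filter.mp h₁).1
          have hD₂P := (Finset.mem_filter.mp h₂).1
          have := hdisj D₁ hD₁P D₂ hD₂P hne
          exact (Finset.disjoint_left.mp this (hu D₁ h₁)) (hf ▸ hu D₂ h₂)
      _ ≤ ρ := hcut
end
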